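/- arXiv:2002.09108 — 3 statements merged into one kernel-verified Lean document; each statement's English description precedes it below -/
import Mathlib

section
/- Fix γ > 0 and δ ∈ (0, γ). Define u'(c) = c^{−γ} exp(δ ∫_0^c (sin t)/t dt) for c > 0. Then u' is strictly positive, strictly decreasing (i.e., its log-derivative equals −(γ − δ sin c)/c < 0), u' is regularly varying at infinity with index −γ, but −c·(u')'(c)/u'(c) = γ − δ sin c does not converge as c → ∞. -/
/-!
Integrating by parts, `|∫_a^b sin t / t dt| ≤ 2 / a` for `0 < a ≤ b`, so the sine integral
`Si` satisfies `Si (l c) - Si c → 0` as `c → ∞`. Hence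
`u'(l c) / u'(c) = l^{-γ} exp (δ (Si (l c) - Si c)) → l^{-γ}`, although the relative risk aversion
`γ - δ sin c` is a nonconstant periodic function and so has no limit.
-/

open Filter Real

theorem Function.Periodic.not_tendsto_atTop {α : Type*} [TopologicalSpace α] [T2Space α]
    {f : ℝ → α} {p : ℝ} (hf : Function.Periodic f p) (hp : 0 < p) {x y : ℝ} (hxy : f x ≠ f y)
    (L : α) : ¬ Tendsto f atTop (nhds L) := by
  have orbit_tendsto : ∀ z, Tendsto (fun n : ℕ => f (z + n * p)) atTop (nhds L) →
      f z = L := fun z hz =>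
    tendsto_nhds_unique (tendsto_const_nhds.congr fun n => (hf.nat_mul n z).symm) hz
  have orbit_atTop : ∀ z, Tendsto (fun n : ℕ => z + n * p) atTop atTop := fun z =>
    tendsto_atTop_add_const_left _ z (tendsto_natCast_atTop_atTop.atTop_mul_const hp)
  intro hL
  exact hxy ((orbit_tendsto x (hL.comp (orbit_atTop x))).trans
    (orbit_tendsto y (hL.comp (orbit_atTop y))).symm)

theorem intervalIntegrable_sin_div (a b : ℝ) :
    IntervalIntegrable (fun t => sin t / t) MeasureTheory.volume a b := by
  refine (continuous_sinc.intervalIntegrable a b).congr_ae ?_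
  filter_upwards [MeasureTheory.Measure.ae_ne _ (0 : ℝ)] with t ht
  exact sinc_of_ne_zero ht

noncomputable def sineIntegral (x : ℝ) : ℝ := ∫ t in (0 : ℝ)..x, sin t / t

theorem hasDerivAt_sineIntegral {x : ℝ} (hx : x ≠ 0) :
    HasDerivAt sineIntegral (sin x / x) x :=
  intervalIntegral.integral_hasDerivAt_right (intervalIntegrable_sin_div 0 x)
    (continuous_sin.measurable.div measurable_id).stronglyMeasurable.stronglyMeasurableAtFilter
    (continuous_sin.continuousAt.div continuousAt_id hx)

theorem sineIntegral_sub (a b : ℝ) :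
    sineIntegral b - sineIntegral a = ∫ t in a..b, sin t / t :=
  intervalIntegral.integral_interval_sub_left (intervalIntegrable_sin_div 0 b)
    (intervalIntegrable_sin_div 0 a)

theorem integral_sin_div_eq_sub_integral_cos_div_sq {a b : ℝ} (ha : 0 < a) (hab : a ≤ b) :
    ∫ t in a..b, sin t / t = cos a / a - cos b / b - ∫ t in a..b, cos t / t ^ 2 := by
  have hne : ∀ t ∈ Set.uIcc a b, t ≠ 0 := fun t ht =>
    (ha.trans_le (Set.uIcc_of_le hab ▸ ht).1).ne'
  have parts := intervalIntegral.integral_mul_deriv_eq_deriv_mul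
    (u := fun t => t⁻¹) (v := fun t => -cos t)
    (fun t ht => hasDerivAt_inv (hne t ht)) (fun t _ => by simpa using (hasDerivAt_cos t).fun_neg)
    ((continuousOn_pow 2).inv₀ fun t ht => pow_ne_zero 2 (hne t ht)).fun_neg.intervalIntegrable
    (continuous_sin.intervalIntegrable a b)
  simp only [neg_mul_neg, inv_mul_eq_div] at parts
  rw [parts]
  ring

theorem abs_integral_cos_div_sq_le {a b : ℝ} (ha : 0 < a) (hab : a ≤ b) :
    |∫ t in a..b, cos t / t ^ 2| ≤ a⁻¹ - b⁻¹ := by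
  have hne : ∀ t ∈ Set.uIcc a b, t ≠ 0 := fun t ht =>
    (ha.trans_le (Set.uIcc_of_le hab ▸ ht).1).ne'
  have hint : IntervalIntegrable (fun t : ℝ => (t ^ 2)⁻¹) MeasureTheory.volume a b :=
    ((continuousOn_pow 2).inv₀ fun t ht => pow_ne_zero 2 (hne t ht)).intervalIntegrable
  have primitive : ∫ t in a..b, (t ^ 2)⁻¹ = a⁻¹ - b⁻¹ := by
    rw [intervalIntegral.integral_eq_sub_of_hasDerivAt (f := fun t => -t⁻¹)
      (fun t ht => by simpa using (hasDerivAt_inv (hne t ht)).fun_neg) hint]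
    ring
  rw [← primitive, ← Real.norm_eq_abs]
  refine intervalIntegral.norm_integral_le_of_norm_le hab (.of_forall fun t _ => ?_) hint
  rw [norm_div, norm_pow, Real.norm_eq_abs, Real.norm_eq_abs, sq_abs, div_eq_mul_inv]
  exact mul_le_of_le_one_left (by positivity) (abs_cos_le_one t)

theorem abs_integral_sin_div_le {a b : ℝ} (ha : 0 < a) (hab : a ≤ b) :
    |∫ t in a..b, sin t / t| ≤ 2 / a := by
  have hb : 0 < b := ha.trans_le hab
  have abs_cos_div_le : ∀ x, 0 < x → |cos x / x| ≤ x⁻¹ := fun x hx => by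
    rw [abs_div, abs_of_pos hx, div_eq_mul_inv]
    exact mul_le_of_le_one_left (by positivity) (abs_cos_le_one x)
  rw [integral_sin_div_eq_sub_integral_cos_div_sq ha hab]
  calc |cos a / a - cos b / b - ∫ t in a..b, cos t / t ^ 2|
      ≤ |cos a / a| + |cos b / b| + |∫ t in a..b, cos t / t ^ 2| :=
        (abs_sub _ _).trans (by gcongr; exact abs_sub _ _)
    _ ≤ a⁻¹ + b⁻¹ + (a⁻¹ - b⁻¹) := by
      gcongr
      exacts [abs_cos_div_le a ha, abs_cos_div_le b hb, abs_integral_cos_div_sq_le ha hab]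
    _ = 2 / a := by ring

theorem abs_sineIntegral_sub_le {a b : ℝ} (ha : 0 < a) (hb : 0 < b) :
    |sineIntegral b - sineIntegral a| ≤ 2 / min a b := by
  wlog hab : a ≤ b generalizing a b
  · rw [abs_sub_comm, min_comm]
    exact this hb ha (le_of_not_ge hab)
  rw [min_eq_left hab, sineIntegral_sub]
  exact abs_integral_sin_div_le ha hab

theorem tendsto_sineIntegral_mul_sub {l : ℝ} (hl : 0 < l) :
    Tendsto (fun c => sineIntegral (l * c) - sineIntegral c) atTop (nhds 0) := by
  have hm : 0 < min 1 l := lt_min one_pos hl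
  refine squeeze_zero_norm' ?_
    ((tendsto_const_nhds (x := (2 : ℝ))).div_atTop (tendsto_id.const_mul_atTop hm))
  filter_upwards [eventually_gt_atTop 0] with c hc
  rw [Real.norm_eq_abs, id, min_mul_of_nonneg _ _ hc.le, one_mul]
  exact abs_sineIntegral_sub_le hc (mul_pos hl hc)

noncomputable def marginalUtility (γ δ c : ℝ) : ℝ := c ^ (-γ) * exp (δ * sineIntegral c)

theorem marginalUtility_pos (γ δ : ℝ) {c : ℝ} (hc : 0 < c) : 0 < marginalUtility γ δ c :=
  mul_pos (rpow_pos_of_pos hc _) (exp_pos _)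

theorem hasDerivAt_marginalUtility (γ δ : ℝ) {c : ℝ} (hc : 0 < c) :
    HasDerivAt (marginalUtility γ δ)
      (marginalUtility γ δ c * (-(γ - δ * sin c) / c)) c := by
  refine ((hasDerivAt_rpow_const (p := -γ) (Or.inl hc.ne')).fun_mul
    ((hasDerivAt_sineIntegral hc.ne').const_mul δ).exp).congr_deriv ?_
  rw [marginalUtility, rpow_sub_one hc.ne']
  field_simp
  ring

theorem marginalUtility_mul_div (γ δ : ℝ) {l c : ℝ} (hl : 0 < l) (hc : 0 < c) :
    marginalUtility γ δ (l * c) / marginalUtility γ δ c =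
      l ^ (-γ) * exp (δ * (sineIntegral (l * c) - sineIntegral c)) := by
  rw [div_eq_iff (marginalUtility_pos γ δ hc).ne', marginalUtility, marginalUtility,
    mul_rpow hl.le hc.le, mul_sub, exp_sub]
  field_simp

theorem tendsto_marginalUtility_mul_div (γ δ : ℝ) {l : ℝ} (hl : 0 < l) :
    Tendsto (fun c => marginalUtility γ δ (l * c) / marginalUtility γ δ c) atTop
      (nhds (l ^ (-γ))) := by
  have hexp : Tendsto (fun c => exp (δ * (sineIntegral (l * c) - sineIntegral c))) atTop
      (nhds 1) := by
    simpa using ((tendsto_sineIntegral_mul_sub hl).const_mul δ).rexp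
  refine Tendsto.congr' ?_ (by simpa using hexp.const_mul (l ^ (-γ)))
  filter_upwards [eventually_gt_atTop 0] with c hc
  exact (marginalUtility_mul_div γ δ hl hc).symm

theorem sub_mul_sin_pos {γ δ : ℝ} (h : |δ| < γ) (c : ℝ) : 0 < γ - δ * sin c := by
  have : δ * sin c ≤ |δ| := by
    calc δ * sin c ≤ |δ * sin c| := le_abs_self _
      _ = |δ| * |sin c| := abs_mul _ _
      _ ≤ |δ| := mul_le_of_le_one_right (abs_nonneg δ) (abs_sin_le_one c)
  linarith

theorem neg_sub_mul_sin_div_neg {γ δ : ℝ} (h : |δ| < γ) {c : ℝ} (hc : 0 < c) :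
    -(γ - δ * sin c) / c < 0 :=
  div_neg_of_neg_of_pos (neg_neg_of_pos (sub_mul_sin_pos h c)) hc

theorem strictAntiOn_marginalUtility {γ δ : ℝ} (h : |δ| < γ) :
    StrictAntiOn (marginalUtility γ δ) (Set.Ioi 0) := by
  refine strictAntiOn_of_deriv_neg (convex_Ioi 0)
    (fun c hc => (hasDerivAt_marginalUtility γ δ hc).continuousAt.continuousWithinAt)
    fun c hc => ?_
  rw [interior_Ioi] at hc
  rw [(hasDerivAt_marginalUtility γ δ hc).deriv]
  exact mul_neg_of_pos_of_neg (marginalUtility_pos γ δ hc) (neg_sub_mul_sin_div_neg h hc)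

theorem not_tendsto_sub_mul_sin (γ : ℝ) {δ : ℝ} (hδ : δ ≠ 0) (L : ℝ) :
    ¬ Tendsto (fun c => γ - δ * sin c) atTop (nhds L) := by
  refine (sin_periodic.comp fun s => γ - δ * s).not_tendsto_atTop two_pi_pos
    (x := π / 2) (y := -(π / 2)) ?_ L
  simp only [Function.comp_apply, sin_neg, sin_pi_div_two]
  intro h
  exact hδ (by linarith)

/-- The marginal utility `u'(c) = c^{-γ} exp(δ ∫_0^c sin t / t dt)` is
positive, strictly decreasing with log-derivative `-(γ - δ sin c)/c < 0`,
regularly varying at infinity with index `-γ`, yet its local relative risk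
aversion `γ - δ sin c` does not converge as `c → ∞`. -/
theorem RV_not_aCRRA (γ δ : ℝ) (hγ : 0 < δ) (hδ : δ < γ) :
    let u' : ℝ → ℝ := fun c =>
      c ^ (-γ) * Real.exp (δ * ∫ t in (0 : ℝ)..c, Real.sin t / t)
    (∀ c : ℝ, 0 < c → 0 < u' c) ∧
    StrictAntiOn u' (Set.Ioi (0 : ℝ)) ∧
    (∀ c : ℝ, 0 < c →
      HasDerivAt u' (u' c * (-(γ - δ * Real.sin c) / c)) c ∧
      -(γ - δ * Real.sin c) / c < 0) ∧
    (∀ l : ℝ, 0 < l →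
      Tendsto (fun c : ℝ => u' (l * c) / u' c) atTop (nhds (l ^ (-γ)))) ∧
    ¬ ∃ L : ℝ, Tendsto (fun c : ℝ => γ - δ * Real.sin c) atTop (nhds L) := by
  intro u'
  have hδγ : |δ| < γ := abs_lt.mpr ⟨by linarith, hδ⟩
  exact ⟨fun c hc => marginalUtility_pos γ δ hc,
    strictAntiOn_marginalUtility hδγ,
    fun c hc => ⟨hasDerivAt_marginalUtility γ δ hc, neg_sub_mul_sin_div_neg hδγ hc⟩,
    fun l hl => tendsto_marginalUtility_mul_div γ δ hl,
    fun ⟨L, hL⟩ => not_tendsto_sub_mul_sin γ hγ.ne' L hL⟩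
end

section
/- Let K be a Z × Z nonnegative matrix, γ > 0, φ(t) = (1 + t^{1/γ})^γ, and F: ℝ_+^Z → ℝ_+^Z defined by Fx = φ(Kx) applied entrywise. If F has a fixed point x* ∈ ℝ_+^Z, then the spectral radius of K is strictly less than 1. -/
/-!
Collatz–Wielandt bound: if `x > 0` and `K x ≤ r x` for a nonnegative matrix `K`, then every
complex eigenvalue `μ` of `K` satisfies `|μ| ≤ r`. Indeed, for an eigenvector `v` and an index
`i₀` maximising `|v i| / x i`, we get `|μ| |v i₀| ≤ (K |v|) i₀ ≤ (|v i₀| / x i₀) (K x) i₀ ≤ r |v i₀|`.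
Since `t < φ(t)`, a fixed point `x = φ(K x)` satisfies `K x < x`, so `x > 0` and `K x ≤ r x` for
some `r < 1`.
-/

/-- The spectral radius of a real square matrix: the supremum of the absolute
values of its complex eigenvalues (roots of the characteristic polynomial). -/
noncomputable def specRad {Z : ℕ} (K : Matrix (Fin Z) (Fin Z) ℝ) : ℝ :=
  sSup ((fun μ : ℂ => ‖μ‖) '' {μ : ℂ | ((K.map (algebraMap ℝ ℂ)).charpoly).IsRoot μ})

open Matrix Finset

lemma self_lt_one_add_rpow_one_div_rpow {t γ : ℝ} (ht : 0 ≤ t) (hγ : 0 < γ) :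
    t < (1 + t ^ (1 / γ)) ^ γ :=
  calc t = (t ^ (1 / γ)) ^ γ := by
        rw [← Real.rpow_mul ht, one_div_mul_cancel hγ.ne', Real.rpow_one]
    _ < (1 + t ^ (1 / γ)) ^ γ := Real.rpow_lt_rpow (by positivity) (lt_one_add _) hγ

lemma exists_lt_one_forall_le_mul {ι : Type*} [Finite ι] {f g : ι → ℝ} (hg : ∀ i, 0 < g i)
    (hfg : ∀ i, f i < g i) : ∃ r, 0 ≤ r ∧ r < 1 ∧ ∀ i, f i ≤ r * g i := by
  cases isEmpty_or_nonempty ι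
  · exact ⟨0, le_rfl, one_pos, isEmptyElim⟩
  obtain ⟨i₀, hi₀⟩ := Finite.exists_max fun i => f i / g i
  refine ⟨max (f i₀ / g i₀) 0, le_max_right _ _,
    max_lt ((div_lt_one (hg i₀)).2 (hfg i₀)) one_pos, fun i => ?_⟩
  rw [← div_le_iff₀ (hg i)]
  exact (hi₀ i).trans (le_max_left _ _)

namespace Matrix

lemma exists_mulVec_eq_smul_of_isRoot_charpoly {n R : Type*} [Fintype n] [DecidableEq n]
    [CommRing R] [IsDomain R] {A : Matrix n n R} {μ : R} (hμ : A.charpoly.IsRoot μ) :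
    ∃ v ≠ 0, A *ᵥ v = μ • v := by
  rw [← charpoly_toLin', ← Module.End.hasEigenvalue_iff_isRoot_charpoly] at hμ
  obtain ⟨v, hv_mem, hv_ne⟩ := hμ.exists_hasEigenvector
  exact ⟨v, hv_ne, by simpa using Module.End.mem_eigenspace_iff.1 hv_mem⟩

variable {ι : Type*} [Fintype ι] {K : Matrix ι ι ℝ}

lemma mulVec_mono_of_nonneg (hK : ∀ i j, 0 ≤ K i j) {u w : ι → ℝ} (huw : u ≤ w) :
    K *ᵥ u ≤ K *ᵥ w :=
  fun i => sum_le_sum fun j _ => mul_le_mul_of_nonneg_left (huw j) (hK i j)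

lemma norm_map_ofReal_mulVec_le (hK : ∀ i j, 0 ≤ K i j) (v : ι → ℂ) (i : ι) :
    ‖(K.map (algebraMap ℝ ℂ) *ᵥ v) i‖ ≤ (K *ᵥ fun j => ‖v j‖) i := by
  refine (norm_sum_le _ _).trans_eq (sum_congr rfl fun j _ => ?_)
  simp [abs_of_nonneg (hK i j)]

lemma norm_le_of_mulVec_le_smul (hK : ∀ i j, 0 ≤ K i j) {x : ι → ℝ} (hx : ∀ i, 0 < x i)
    {r : ℝ} (hKx : K *ᵥ x ≤ r • x) {μ : ℂ} {v : ι → ℂ} (hv : v ≠ 0)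
    (hμv : K.map (algebraMap ℝ ℂ) *ᵥ v = μ • v) : ‖μ‖ ≤ r := by
  obtain ⟨j, hj⟩ := Function.ne_iff.1 hv
  have : Nonempty ι := ⟨j⟩
  obtain ⟨i₀, hi₀⟩ := Finite.exists_max fun i => ‖v i‖ / x i
  set c := ‖v i₀‖ / x i₀
  have hc : 0 < c := (div_pos (norm_pos_iff.2 hj) (hx j)).trans_le (hi₀ j)
  have hvc : (fun j => ‖v j‖) ≤ c • x := fun j => (div_le_iff₀ (hx j)).1 (hi₀ j)
  have hv₀ : 0 < ‖v i₀‖ := (div_pos_iff_of_pos_right (hx i₀)).1 hc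
  refine le_of_mul_le_mul_right ?_ hv₀
  calc ‖μ‖ * ‖v i₀‖ = ‖(K.map (algebraMap ℝ ℂ) *ᵥ v) i₀‖ := by
        rw [hμv, Pi.smul_apply, smul_eq_mul, norm_mul]
    _ ≤ (K *ᵥ fun j => ‖v j‖) i₀ := norm_map_ofReal_mulVec_le hK v i₀
    _ ≤ (K *ᵥ (c • x)) i₀ := mulVec_mono_of_nonneg hK hvc i₀
    _ = c * (K *ᵥ x) i₀ := by simp [mulVec_smul]
    _ ≤ c * (r * x i₀) := mul_le_mul_of_nonneg_left (hKx i₀) hc.le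
    _ = r * ‖v i₀‖ := by
        rw [mul_left_comm, div_mul_cancel₀ _ (hx i₀).ne']

end Matrix

lemma specRad_le_of_mulVec_le_smul {Z : ℕ} {K : Matrix (Fin Z) (Fin Z) ℝ} (hK : ∀ i j, 0 ≤ K i j)
    {x : Fin Z → ℝ} (hx : ∀ i, 0 < x i) {r : ℝ} (hr : 0 ≤ r) (hKx : K *ᵥ x ≤ r • x) :
    specRad K ≤ r := by
  refine Real.sSup_le ?_ hr
  rintro _ ⟨μ, hμ, rfl⟩
  obtain ⟨v, hv, hμv⟩ := exists_mulVec_eq_smul_of_isRoot_charpoly hμ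
  exact norm_le_of_mulVec_le_smul hK hx hKx hv hμv

theorem fixedPoint_implies_specRad_lt_one_general {Z : ℕ}
    (K : Matrix (Fin Z) (Fin Z) ℝ) (hK : ∀ i j, 0 ≤ K i j)
    (γ : ℝ) (hγ : 0 < γ)
    (x : Fin Z → ℝ) (hx : ∀ z, 0 ≤ x z)
    (hfix : ∀ z, x z = (1 + (K.mulVec x z) ^ (1 / γ)) ^ γ) :
    specRad K < 1 := by
  have hKx_nonneg : 0 ≤ K *ᵥ x := by
    simpa using mulVec_mono_of_nonneg hK (show 0 ≤ x from hx)
  have hKx_lt : ∀ z, (K *ᵥ x) z < x z := fun z => by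
    rw [hfix z]
    exact self_lt_one_add_rpow_one_div_rpow (hKx_nonneg z) hγ
  have hx_pos : ∀ z, 0 < x z := fun z => (hKx_nonneg z).trans_lt (hKx_lt z)
  obtain ⟨r, hr_nonneg, hr_lt, hKx_le⟩ := exists_lt_one_forall_le_mul hx_pos hKx_lt
  exact (specRad_le_of_mulVec_le_smul hK hx_pos hr_nonneg hKx_le).trans_lt hr_lt

/-- If `Fx = φ(Kx)` with `φ(t) = (1 + t^{1/γ})^γ` has a nonnegative fixed
point, then the spectral radius of the nonnegative matrix `K` is less than 1. -/
theorem fixedPoint_implies_specRad_lt_one {Z : ℕ} (hZ : 0 < Z)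
    (K : Matrix (Fin Z) (Fin Z) ℝ) (hK : ∀ i j, 0 ≤ K i j)
    (γ : ℝ) (hγ : 0 < γ)
    (x : Fin Z → ℝ) (hx : ∀ z, 0 ≤ x z)
    (hfix : ∀ z, x z = (1 + (K.mulVec x z) ^ (1 / γ)) ^ γ) :
    specRad K < 1 :=
  fixedPoint_implies_specRad_lt_one_general K hK γ hγ x hx hfix
end

section
/- Let K be a Z × Z nonnegative matrix with spectral radius r(K) < 1, γ > 0, φ(t) = (1 + t^{1/γ})^γ, and F: ℝ_+^Z → ℝ_+^Z given by Fx = φ(Kx) entrywise. Then F has a unique fixed point x* ∈ ℝ_+^Z, and any fixed point satisfies 1 ≤ x* ≤ (I − aK)^{−1} b·1 componentwise, where a ∈ [1, 1/r(K)) and b ≥ 0 are chosen such that φ(t) ≤ at + b for all t ≥ 0. -/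
open Filter Set Matrix
open scoped NNReal ENNReal

theorem eventually_nnnorm_pow_le_of_spectralRadius_lt {A : Type*} [NormedRing A]
    [NormedAlgebra ℂ A] [CompleteSpace A] {a : A} {c : ℝ≥0} (h : spectralRadius ℂ a < c) :
    ∀ᶠ n : ℕ in atTop, ‖a ^ n‖₊ ≤ c ^ n := by
  have hgelfand := spectrum.pow_nnnorm_pow_one_div_tendsto_nhds_spectralRadius a
  filter_upwards [hgelfand.eventually_lt_const h, eventually_ne_atTop 0] with n hn hn0
  have := pow_le_pow_left' hn.le n
  rw [← ENNReal.rpow_natCast, ← ENNReal.rpow_mul, one_div_mul_cancel (by exact_mod_cast hn0),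
    ENNReal.rpow_one] at this
  exact_mod_cast this

theorem specRad_nonneg {Z : ℕ} (K : Matrix (Fin Z) (Fin Z) ℝ) : 0 ≤ specRad K :=
  Real.sSup_nonneg (by rintro _ ⟨μ, -, rfl⟩; exact norm_nonneg μ)

theorem spectralRadius_map_le_specRad {Z : ℕ} (K : Matrix (Fin Z) (Fin Z) ℝ) :
    spectralRadius ℂ (K.map (algebraMap ℝ ℂ)) ≤ ENNReal.ofReal (specRad K) := by
  refine iSup₂_le fun μ hμ => ?_
  rw [← ENNReal.ofReal_coe_nnreal, coe_nnnorm]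
  refine ENNReal.ofReal_le_ofReal
    (le_csSup ?_ ⟨μ, mem_spectrum_iff_isRoot_charpoly.mp hμ, rfl⟩)
  exact ((Polynomial.finite_setOfPred_isRoot (charpoly_monic _).ne_zero).image _).bddAbove

open scoped Matrix.Norms.Frobenius in
theorem summable_pow_smul_of_mul_specRad_lt_one {Z : ℕ} (K : Matrix (Fin Z) (Fin Z) ℝ) {a : ℝ}
    (ha : 0 < a) (h : a * specRad K < 1) : Summable fun n : ℕ => (a • K) ^ n := by
  obtain ⟨c, hKc, hca⟩ := exists_between ((lt_div_iff₀' ha).mpr h)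
  rw [lt_div_iff₀' ha] at hca
  lift c to ℝ≥0 using (specRad_nonneg K).trans hKc.le
  have hρ : spectralRadius ℂ (K.map (algebraMap ℝ ℂ)) < c := by
    refine (spectralRadius_map_le_specRad K).trans_lt ?_
    rw [← ENNReal.ofReal_coe_nnreal]
    exact (ENNReal.ofReal_lt_ofReal_iff_of_nonneg (specRad_nonneg K)).mpr hKc
  refine .of_norm_bounded_eventually_nat (summable_geometric_of_lt_one (by positivity) hca) ?_
  filter_upwards [eventually_nnnorm_pow_le_of_spectralRadius_lt hρ] with n hn
  rw [← Matrix.map_pow, frobenius_nnnorm_map_eq _ _ (by simp)] at hn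
  calc ‖(a • K) ^ n‖ = a ^ n * ‖K ^ n‖ := by
        rw [smul_pow, norm_smul, Real.norm_of_nonneg (by positivity)]
    _ ≤ a ^ n * c ^ n := by gcongr; exact_mod_cast hn
    _ = (a * c) ^ n := (mul_pow a c n).symm

namespace Matrix

section Order

variable {m n R : Type*} [Fintype n] [Semiring R] [PartialOrder R] [IsOrderedRing R]
  {A : Matrix m n R}

theorem mulVec_mono (hA : ∀ i j, 0 ≤ A i j) : Monotone (A *ᵥ ·) :=
  fun _ _ hxy i => Finset.sum_le_sum fun j _ => mul_le_mul_of_nonneg_left (hxy j) (hA i j)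

theorem mulVec_nonneg (hA : ∀ i j, 0 ≤ A i j) {x : n → R} (hx : 0 ≤ x) :
    0 ≤ A *ᵥ x := by
  simpa only [mulVec_zero] using mulVec_mono hA hx

end Order

variable {n : Type*} [Fintype n] [DecidableEq n]

theorem inv_one_sub_eq_tsum_pow {R : Type*} [CommRing R] [TopologicalSpace R]
    [IsTopologicalRing R] [T2Space R] {A : Matrix n n R} (h : Summable (A ^ ·)) :
    (1 - A)⁻¹ = ∑' k, A ^ k :=
  inv_eq_right_inv h.one_sub_mul_tsum_pow

variable {A : Matrix n n ℝ}

theorem inv_one_sub_apply_nonneg (hA : ∀ i j, 0 ≤ A i j) (h : Summable (A ^ ·)) (i j : n) :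
    0 ≤ (1 - A)⁻¹ i j := by
  rw [inv_one_sub_eq_tsum_pow h]
  exact (Pi.hasSum.mp (Pi.hasSum.mp h.hasSum i) j).nonneg fun k => pow_apply_nonneg hA k i j

theorem inv_one_sub_mulVec_eq (h : Summable (A ^ ·)) (v : n → ℝ) :
    (1 - A)⁻¹ *ᵥ v = A *ᵥ ((1 - A)⁻¹ *ᵥ v) + v := by
  have := congrArg (· *ᵥ v) h.one_sub_mul_tsum_pow
  simp only [← inv_one_sub_eq_tsum_pow h, ← mulVec_mulVec, sub_mulVec, one_mulVec] at this
  exact sub_eq_iff_eq_add'.mp this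

theorem le_inv_one_sub_mulVec (hA : ∀ i j, 0 ≤ A i j) (h : Summable (A ^ ·)) {x v : n → ℝ}
    (hx : x ≤ A *ᵥ x + v) : x ≤ (1 - A)⁻¹ *ᵥ v := by
  have hsub : (1 - A) *ᵥ x ≤ v := by
    rw [sub_mulVec, one_mulVec]
    exact sub_le_iff_le_add'.mpr hx
  calc x = (1 - A)⁻¹ *ᵥ ((1 - A) *ᵥ x) := by
        rw [mulVec_mulVec, inv_one_sub_eq_tsum_pow h, h.tsum_pow_mul_one_sub, one_mulVec]
    _ ≤ (1 - A)⁻¹ *ᵥ v := mulVec_mono (inv_one_sub_apply_nonneg hA h) hsub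

end Matrix

theorem exists_isFixedPt_of_mapsTo_Icc {α : Type*} [ConditionallyCompleteLattice α]
    {f : α → α} {l u : α} (hlu : l ≤ u) (hf : MonotoneOn f (Icc l u))
    (hmaps : MapsTo f (Icc l u) (Icc l u)) : ∃ x ∈ Icc l u, Function.IsFixedPt f x := by
  have : Fact (l ≤ u) := ⟨hlu⟩
  let g : Icc l u →o Icc l u := ⟨hmaps.restrict f _ _, fun x y hxy => hf x.2 y.2 hxy⟩
  exact ⟨g.lfp, g.lfp.2, congrArg Subtype.val g.map_lfp⟩

section FixedPoint

variable {n : Type*} [Fintype n] {K : Matrix n n ℝ} {f : ℝ → ℝ}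

theorem le_of_eq_comp_mulVec (hK : ∀ i j, 0 ≤ K i j) (hf : MonotoneOn f (Ici 0))
    (hf₀ : ∀ t, 0 ≤ t → 0 < f t)
    (hsub : ∀ ⦃t l⦄, 0 ≤ t → 0 ≤ l → l < 1 → l * f t < f (l * t))
    {x y : n → ℝ} (hx₀ : 0 ≤ x) (hy₀ : 0 ≤ y)
    (hx : ∀ z, x z = f ((K *ᵥ x) z)) (hy : ∀ z, y z = f ((K *ᵥ y) z)) : x ≤ y := by
  by_contra hxy
  obtain ⟨z₁, hz₁⟩ : ∃ z, y z < x z := by simpa [Pi.le_def] using hxy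
  have : Nonempty n := ⟨z₁⟩
  have hKx : 0 ≤ K *ᵥ x := mulVec_nonneg hK hx₀
  have hxpos : ∀ z, 0 < x z := fun z => (hx z).symm ▸ hf₀ _ (hKx z)
  -- `l` is the largest scalar with `l • x ≤ y`
  obtain ⟨z₀, hz₀⟩ := Finite.exists_min fun z => y z / x z
  set l := y z₀ / x z₀
  have hl₀ : 0 ≤ l := div_nonneg (hy₀ z₀) (hxpos z₀).le
  have hl₁ : l < 1 := (hz₀ z₁).trans_lt ((div_lt_one (hxpos z₁)).mpr hz₁)
  have hlxy : l • x ≤ y := fun z => (le_div_iff₀ (hxpos z)).mp (hz₀ z)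
  have hKxy : l * (K *ᵥ x) z₀ ≤ (K *ᵥ y) z₀ := by
    simpa [mulVec_smul] using mulVec_mono hK hlxy z₀
  have hlKx : 0 ≤ l * (K *ᵥ x) z₀ := mul_nonneg hl₀ (hKx z₀)
  have : y z₀ < y z₀ := calc
    y z₀ = l * f ((K *ᵥ x) z₀) := by rw [← hx z₀, div_mul_cancel₀ _ (hxpos z₀).ne']
    _ < f (l * (K *ᵥ x) z₀) := hsub (hKx z₀) hl₀ hl₁
    _ ≤ f ((K *ᵥ y) z₀) := hf hlKx (hlKx.trans hKxy) hKxy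
    _ = y z₀ := (hy z₀).symm
  exact lt_irrefl _ this

theorem existsUnique_nonneg_eq_comp_mulVec (hK : ∀ i j, 0 ≤ K i j) (hf : MonotoneOn f (Ici 0))
    (hf₀ : ∀ t, 0 ≤ t → 0 < f t)
    (hsub : ∀ ⦃t l⦄, 0 ≤ t → 0 ≤ l → l < 1 → l * f t < f (l * t))
    {M : n → ℝ} (hM : 0 ≤ M) (hfM : ∀ z, f ((K *ᵥ M) z) ≤ M z) :
    ∃! x : n → ℝ, 0 ≤ x ∧ ∀ z, x z = f ((K *ᵥ x) z) := by
  have hFmono : MonotoneOn (fun x z => f ((K *ᵥ x) z)) (Icc 0 M) := fun x hx y hy hxy z =>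
    hf (mulVec_nonneg hK hx.1 z) (mulVec_nonneg hK hy.1 z) (mulVec_mono hK hxy z)
  have hFmaps : MapsTo (fun x z => f ((K *ᵥ x) z)) (Icc 0 M) (Icc 0 M) := fun x hx =>
    ⟨fun z => (hf₀ _ (mulVec_nonneg hK hx.1 z)).le,
      fun z => (hFmono hx ⟨hM, le_rfl⟩ hx.2 z).trans (hfM z)⟩
  obtain ⟨x, hx, hfix⟩ := exists_isFixedPt_of_mapsTo_Icc hM hFmono hFmaps
  have hxfix : ∀ z, x z = f ((K *ᵥ x) z) := fun z => (congrFun hfix z).symm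
  exact ⟨x, ⟨hx.1, hxfix⟩, fun y ⟨hy, hyfix⟩ =>
    le_antisymm (le_of_eq_comp_mulVec hK hf hf₀ hsub hy hx.1 hyfix hxfix)
      (le_of_eq_comp_mulVec hK hf hf₀ hsub hx.1 hy hxfix hyfix)⟩

end FixedPoint

noncomputable def phi (γ t : ℝ) : ℝ := (1 + t ^ (1 / γ)) ^ γ

section Phi

variable {γ : ℝ}

theorem one_le_phi (hγ : 0 ≤ γ) {t : ℝ} (ht : 0 ≤ t) : 1 ≤ phi γ t :=
  Real.one_le_rpow (le_add_of_nonneg_right (Real.rpow_nonneg ht _)) hγ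

theorem monotoneOn_phi (hγ : 0 ≤ γ) : MonotoneOn (phi γ) (Ici 0) := fun s hs t _ hst => by
  unfold phi
  gcongr
  exact add_nonneg zero_le_one (Real.rpow_nonneg hs _)

theorem mul_phi_lt_phi_mul (hγ : 0 < γ) {t l : ℝ} (ht : 0 ≤ t) (hl₀ : 0 ≤ l)
    (hl₁ : l < 1) : l * phi γ t < phi γ (l * t) := by
  have hl : (l ^ (1 / γ)) ^ γ = l := by
    rw [← Real.rpow_mul hl₀, one_div_mul_cancel hγ.ne', Real.rpow_one]
  have hlγ : l ^ (1 / γ) < 1 := Real.rpow_lt_one hl₀ hl₁ (by positivity)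
  calc l * phi γ t = (l ^ (1 / γ) * (1 + t ^ (1 / γ))) ^ γ := by
        rw [phi, Real.mul_rpow (Real.rpow_nonneg hl₀ _) (by positivity), hl]
    _ < (1 + l ^ (1 / γ) * t ^ (1 / γ)) ^ γ := by
        gcongr
        rw [mul_one_add]
        linarith
    _ = phi γ (l * t) := by rw [phi, Real.mul_rpow hl₀ ht]

end Phi

theorem fixedPoint_exists_unique_of_specRad_lt_one_general {Z : ℕ}
    (K : Matrix (Fin Z) (Fin Z) ℝ) (hK : ∀ i j, 0 ≤ K i j)
    (γ : ℝ) (hγ : 0 < γ)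
    (a b : ℝ) (ha1 : 1 ≤ a) (har : a * specRad K < 1) (hb : 0 ≤ b)
    (hφ : ∀ t : ℝ, 0 ≤ t → (1 + t ^ (1 / γ)) ^ γ ≤ a * t + b) :
    (∃! x : Fin Z → ℝ, (∀ z, 0 ≤ x z) ∧
      ∀ z, x z = (1 + (K.mulVec x z) ^ (1 / γ)) ^ γ) ∧
    (∀ x : Fin Z → ℝ, (∀ z, 0 ≤ x z) →
      (∀ z, x z = (1 + (K.mulVec x z) ^ (1 / γ)) ^ γ) →
      ∀ z, 1 ≤ x z ∧
        x z ≤ (1 - a • K)⁻¹.mulVec (fun _ => b) z) := by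
  have hsum := summable_pow_smul_of_mul_specRad_lt_one K (by linarith) har
  have haK : ∀ i j, 0 ≤ (a • K) i j := fun i j => mul_nonneg (by linarith) (hK i j)
  have hφ' : ∀ v : Fin Z → ℝ, 0 ≤ v →
      ∀ w, phi γ ((K *ᵥ v) w) ≤ ((a • K) *ᵥ v) w + b := fun v hv w => by
    simpa [smul_mulVec, phi] using hφ _ (mulVec_nonneg hK hv w)
  set M := (1 - a • K)⁻¹ *ᵥ fun _ => b
  have hM : 0 ≤ M := mulVec_nonneg (inv_one_sub_apply_nonneg haK hsum) fun _ => hb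
  have hφM : ∀ w, phi γ ((K *ᵥ M) w) ≤ M w := fun w =>
    (hφ' M hM w).trans_eq (congrFun (inv_one_sub_mulVec_eq hsum _) w).symm
  refine ⟨existsUnique_nonneg_eq_comp_mulVec hK (monotoneOn_phi hγ.le)
    (fun t ht => zero_lt_one.trans_le (one_le_phi hγ.le ht)) (fun _ _ => mul_phi_lt_phi_mul hγ)
    hM hφM, fun x hx hfix z => ⟨?_, ?_⟩⟩
  · exact (hfix z).symm ▸ one_le_phi hγ.le (mulVec_nonneg hK hx z)
  · exact le_inv_one_sub_mulVec haK hsum (fun w => (hfix w).trans_le (hφ' x hx w)) z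

/-- If `r(K) < 1` then `Fx = φ(Kx)` has a unique nonnegative fixed point, and
any fixed point `x*` satisfies `1 ≤ x* ≤ (I - aK)⁻¹ b·1` componentwise,
whenever `a ≥ 1`, `a·r(K) < 1`, `b ≥ 0` and `φ(t) ≤ at + b` for `t ≥ 0`. -/
theorem fixedPoint_exists_unique_of_specRad_lt_one {Z : ℕ} (hZ : 0 < Z)
    (K : Matrix (Fin Z) (Fin Z) ℝ) (hK : ∀ i j, 0 ≤ K i j)
    (hr : specRad K < 1)
    (γ : ℝ) (hγ : 0 < γ)
    (a b : ℝ) (ha1 : 1 ≤ a) (har : a * specRad K < 1) (hb : 0 ≤ b)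
    (hφ : ∀ t : ℝ, 0 ≤ t → (1 + t ^ (1 / γ)) ^ γ ≤ a * t + b) :
    (∃! x : Fin Z → ℝ, (∀ z, 0 ≤ x z) ∧
      ∀ z, x z = (1 + (K.mulVec x z) ^ (1 / γ)) ^ γ) ∧
    (∀ x : Fin Z → ℝ, (∀ z, 0 ≤ x z) →
      (∀ z, x z = (1 + (K.mulVec x z) ^ (1 / γ)) ^ γ) →
      ∀ z, 1 ≤ x z ∧
        x z ≤ (1 - a • K)⁻¹.mulVec (fun _ => b) z) :=
  fixedPoint_exists_unique_of_specRad_lt_one_general K hK γ hγ a b ha1 har hb hφ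
end
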